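/- arXiv:1506.02172 — 8 statements merged into one kernel-verified Lean document; each statement's English description precedes it below -/
import Mathlib

section
/- Let D be a principal ideal domain, let d ∈ D be neither zero nor a unit, and let A be an n×n matrix over D. If f ∈ D[X] is a (d)-minimal polynomial of A, then every polynomial g in the (d)-ideal N_{(d)}(A) with deg(g) < deg(f) has leading coefficient lc(g) that is not invertible modulo d, i.e. gcd(lc(g), d) ≠ 1. -/
/-- `f(A) ∈ d·M_n(D)`, i.e. `f` belongs to the `(d)`-ideal `N_{(d)}(A)` of the matrix `A`. -/
def memNullDvd {D : Type*} [CommRing D] {n : ℕ} (A : Matrix (Fin n) (Fin n) D) (d : D)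
    (f : Polynomial D) : Prop :=
  ∃ B : Matrix (Fin n) (Fin n) D, Polynomial.aeval A f = d • B

/-- `f` is a `(d)`-minimal polynomial of `A`: a monic polynomial in `N_{(d)}(A)` of minimal
degree among monic polynomials in `N_{(d)}(A)`. -/
def IsMinPolyMod {D : Type*} [CommRing D] {n : ℕ} (A : Matrix (Fin n) (Fin n) D) (d : D)
    (f : Polynomial D) : Prop :=
  f.Monic ∧ memNullDvd A d f ∧
    ∀ g : Polynomial D, g.Monic → memNullDvd A d g → f.degree ≤ g.degree

/-!
If `u * lc g + v * d = 1`, then `u • g + (v * d) • X ^ deg g` is a monic polynomial of degree at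
most `deg g` which still lies in `N_{(d)}(A)`, since `N_{(d)}(A)` is an ideal containing `d`.
So no polynomial of `N_{(d)}(A)` whose leading coefficient is invertible modulo `d` can be
shorter than a `(d)`-minimal polynomial. The zero polynomial is excluded because `d` is not a unit.
-/

open Polynomial

namespace Polynomial

variable {R : Type*} [Semiring R] {g : R[X]} {u w : R}

theorem natDegree_C_mul_add_C_mul_X_pow_natDegree_le :
    (C u * g + C w * X ^ g.natDegree).natDegree ≤ g.natDegree :=
  natDegree_add_le_of_degree_le (natDegree_C_mul_le _ _)
    ((natDegree_C_mul_le _ _).trans (natDegree_X_pow_le _))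

theorem monic_C_mul_add_C_mul_X_pow_natDegree (h : u * g.leadingCoeff + w = 1) :
    (C u * g + C w * X ^ g.natDegree).Monic := by
  refine monic_of_natDegree_le_of_coeff_eq_one _ natDegree_C_mul_add_C_mul_X_pow_natDegree_le ?_
  rw [coeff_add, coeff_C_mul, coeff_C_mul_X_pow, if_pos rfl]
  exact h

end Polynomial

section NullIdeal

variable {D : Type*} [CommRing D] {n : ℕ}

/-- The `(d)`-ideal `N_{(d)}(A)`. -/
def nullDvdIdeal (A : Matrix (Fin n) (Fin n) D) (d : D) : Ideal D[X] where
  carrier := {f | memNullDvd A d f}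
  zero_mem' := ⟨0, by simp⟩
  add_mem' := by
    rintro f g ⟨B, hB⟩ ⟨B', hB'⟩
    exact ⟨B + B', by rw [map_add, hB, hB', smul_add]⟩
  smul_mem' := by
    rintro p f ⟨B, hB⟩
    exact ⟨aeval A p * B, by rw [smul_eq_mul, map_mul, hB, mul_smul_comm]⟩

variable {A : Matrix (Fin n) (Fin n) D} {d : D}

@[simp]
theorem mem_nullDvdIdeal {f : D[X]} : f ∈ nullDvdIdeal A d ↔ memNullDvd A d f := Iff.rfl

theorem C_mem_nullDvdIdeal : C d ∈ nullDvdIdeal A d :=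
  ⟨1, by rw [aeval_C, Algebra.algebraMap_eq_smul_one]⟩

theorem exists_monic_memNullDvd_natDegree_le_of_isCoprime {g : D[X]} (hg : memNullDvd A d g)
    (hcop : IsCoprime g.leadingCoeff d) :
    ∃ h : D[X], h.Monic ∧ memNullDvd A d h ∧ h.natDegree ≤ g.natDegree := by
  obtain ⟨u, v, huv⟩ := hcop
  refine ⟨C u * g + C (v * d) * X ^ g.natDegree,
    monic_C_mul_add_C_mul_X_pow_natDegree (by rw [← huv, mul_comm v]), ?_,
    natDegree_C_mul_add_C_mul_X_pow_natDegree_le⟩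
  rw [← mem_nullDvdIdeal, C_mul, mul_comm (C v), mul_assoc]
  exact Ideal.add_mem _ (Ideal.mul_mem_left _ _ hg) (Ideal.mul_mem_right _ _ C_mem_nullDvdIdeal)

end NullIdeal

theorem stmt0_general {D : Type*} [CommRing D]
    {n : ℕ} (A : Matrix (Fin n) (Fin n) D) (d : D) (hdu : ¬ IsUnit d)
    (f : Polynomial D) (hf : IsMinPolyMod A d f)
    (g : Polynomial D) (hg : memNullDvd A d g) (hdeg : g.degree < f.degree) :
    ¬ IsCoprime g.leadingCoeff d := by
  intro hcop
  by_cases hg0 : g = 0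
  · rw [hg0, leadingCoeff_zero, isCoprime_zero_left] at hcop
    exact hdu hcop
  obtain ⟨h, h_monic, h_mem, h_natDegree⟩ :=
    exists_monic_memNullDvd_natDegree_le_of_isCoprime hg hcop
  have hfh : f.degree ≤ h.degree := hf.2.2 h h_monic h_mem
  have hhg : h.degree ≤ g.degree := by
    rw [degree_eq_natDegree hg0]
    exact degree_le_of_natDegree_le h_natDegree
  exact absurd (hfh.trans hhg) hdeg.not_ge

/-- If `d` is neither zero nor a unit and `f` is a `(d)`-minimal polynomial
of `A`, then every `g ∈ N_{(d)}(A)` with `deg g < deg f` has leading coefficient that is not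
invertible modulo `d`, i.e. `gcd(lc g, d) ≠ 1`. -/
theorem stmt0 {D : Type*} [CommRing D] [IsDomain D] [IsPrincipalIdealRing D]
    {n : ℕ} (A : Matrix (Fin n) (Fin n) D) (d : D) (hd0 : d ≠ 0) (hdu : ¬ IsUnit d)
    (f : Polynomial D) (hf : IsMinPolyMod A d f)
    (g : Polynomial D) (hg : memNullDvd A d g) (hdeg : g.degree < f.degree) :
    ¬ IsCoprime g.leadingCoeff d :=
  stmt0_general A d hdu f hf g hg hdeg
end

section
/- Let D be a principal ideal domain, A an n×n matrix over D, and a, b ∈ D coprime elements. Then N_{(ab)}(A) = a·N_{(b)}(A) + b·N_{(a)}(A), i.e. the (ab)-ideal of A equals the sum of a times the (b)-ideal of A and b times the (a)-ideal of A. -/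
/-!
If `ua + vb = 1`, then `f = a·(u f) + b·(v f)`, and for `f ∈ N_{(ab)}(A)` the multiple `u f`
lies in `N_{(b)}(A)` because `u f(A) = b·(ua·B)`; symmetrically `v f ∈ N_{(a)}(A)`. Conversely
`a·N_{(b)}(A)` and `b·N_{(a)}(A)` are both contained in the ideal `N_{(ab)}(A)`.
-/

open Polynomial

namespace memNullDvd

variable {D : Type*} [CommRing D] {n : ℕ} {A : Matrix (Fin n) (Fin n) D} {d e : D}
  {f g : D[X]}

theorem of_dvd (hde : d ∣ e) (hf : memNullDvd A e f) : memNullDvd A d f := by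
  obtain ⟨c, rfl⟩ := hde
  obtain ⟨B, hB⟩ := hf
  exact ⟨c • B, by rw [hB, smul_smul]⟩

theorem add (hf : memNullDvd A d f) (hg : memNullDvd A d g) : memNullDvd A d (f + g) := by
  obtain ⟨B, hB⟩ := hf
  obtain ⟨C, hC⟩ := hg
  exact ⟨B + C, by rw [map_add, hB, hC, smul_add]⟩

theorem C_mul (c : D) (hf : memNullDvd A d f) : memNullDvd A (c * d) (C c * f) := by
  obtain ⟨B, hB⟩ := hf
  exact ⟨B, by rw [map_mul, aeval_C, hB, Algebra.algebraMap_eq_smul_one, smul_mul_assoc,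
    one_mul, smul_smul]⟩

end memNullDvd

theorem stmt1_general {D : Type*} [CommRing D]
    {n : ℕ} (A : Matrix (Fin n) (Fin n) D) (a b : D) (hab : IsCoprime a b) :
    ∀ f : Polynomial D, memNullDvd A (a * b) f ↔
      ∃ g h : Polynomial D, memNullDvd A b g ∧ memNullDvd A a h ∧
        f = Polynomial.C a * g + Polynomial.C b * h := by
  intro f
  constructor
  · intro hf
    obtain ⟨u, v, huv⟩ := hab
    refine ⟨C u * f, C v * f, (hf.C_mul u).of_dvd ⟨u * a, by ring⟩,
      (hf.C_mul v).of_dvd ⟨v * b, by ring⟩, ?_⟩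
    have hC : C u * C a + C v * C b = (1 : D[X]) := by
      rw [← C_mul, ← C_mul, ← C_add, huv, C_1]
    linear_combination (-f) * hC
  · rintro ⟨g, h, hg, hh, rfl⟩
    exact (hg.C_mul a).add (mul_comm b a ▸ hh.C_mul b)

/-- For coprime `a, b ∈ D`, one has
`N_{(ab)}(A) = a·N_{(b)}(A) + b·N_{(a)}(A)` (stated elementwise: `f` lies in the `(ab)`-ideal
iff it is of the form `a·g + b·h` with `g ∈ N_{(b)}(A)` and `h ∈ N_{(a)}(A)`). -/
theorem stmt1 {D : Type*} [CommRing D] [IsDomain D] [IsPrincipalIdealRing D]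
    {n : ℕ} (A : Matrix (Fin n) (Fin n) D) (a b : D) (hab : IsCoprime a b) :
    ∀ f : Polynomial D, memNullDvd A (a * b) f ↔
      ∃ g h : Polynomial D, memNullDvd A b g ∧ memNullDvd A a h ∧
        f = Polynomial.C a * g + Polynomial.C b * h :=
  stmt1_general A a b hab
end

section
/- Let D be a principal ideal domain, p ∈ D a prime element, ℓ ≥ 1, and A an n×n matrix over D. If f ∈ N_{(p^ℓ)}(A) and f ∉ p^ℓ·D[X], then deg(f) ≥ d_p(A), the p-degree of A. -/
/-!
If `f(A) ≡ 0 mod p^ℓ` and `p^ℓ ∤ f`, strip from `f` the powers of `p` dividing all its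
coefficients: the cofactor `g` still satisfies `g(A) ≡ 0 mod p`, is nonzero modulo `p`, and
`deg g ≤ deg f`. Over the field `D/(p)` the reduction of `g` annihilates the reduction of `A`, so
it has degree at least that of the minimal polynomial of `A mod p`; a monic lift of that minimal
polynomial lies in `N_{(p)}(A)`, so its degree is at least `d_p(A)`.
-/

open Polynomial

lemma Matrix.aeval_map_map {R S : Type*} [CommRing R] [CommRing S] (φ : R →+* S) {n : ℕ}
    (A : Matrix (Fin n) (Fin n) R) (f : R[X]) :
    aeval (A.map φ) (f.map φ) = (aeval A f).map φ :=
  (map_aeval_eq_aeval_map (ψ := φ.mapMatrix)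
    (by ext r : 1; simp [Matrix.algebraMap_eq_diagonal, Matrix.diagonal_map]) f A).symm

section CommRing

variable {D : Type*} [CommRing D] {n : ℕ} {A : Matrix (Fin n) (Fin n) D}

lemma memNullDvd_iff_forall_dvd {d : D} {f : D[X]} :
    memNullDvd A d f ↔ ∀ i j, d ∣ aeval A f i j := by
  refine ⟨fun ⟨B, hB⟩ i j ↦ ⟨B i j, by rw [hB]; rfl⟩, fun h ↦ ?_⟩
  choose B hB using h
  exact ⟨Matrix.of B, Matrix.ext hB⟩

lemma memNullDvd_iff_aeval_map_eq_zero {d : D} {f : D[X]} :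
    memNullDvd A d f ↔
      aeval (A.map (Ideal.Quotient.mk (Ideal.span {d})))
        (f.map (Ideal.Quotient.mk (Ideal.span {d}))) = 0 := by
  simp only [memNullDvd_iff_forall_dvd, Matrix.aeval_map_map, ← Matrix.ext_iff,
    Matrix.map_apply, Matrix.zero_apply, Ideal.Quotient.eq_zero_iff_dvd]

lemma memNullDvd.of_dvd_s2 {d e : D} {f : D[X]} (hde : d ∣ e) (hf : memNullDvd A e f) :
    memNullDvd A d f := by
  rw [memNullDvd_iff_forall_dvd] at hf ⊢
  exact fun i j ↦ hde.trans (hf i j)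

end CommRing

section IsDomain

variable {D : Type*} [CommRing D] [IsDomain D] {n : ℕ} {A : Matrix (Fin n) (Fin n) D}

lemma memNullDvd.of_C_mul {p d : D} {g : D[X]} (hp : p ≠ 0)
    (hg : memNullDvd A (p * d) (C p * g)) : memNullDvd A d g := by
  rw [memNullDvd_iff_forall_dvd] at hg ⊢
  intro i j
  have hij := hg i j
  rwa [map_mul, aeval_C, ← Algebra.smul_def, Matrix.smul_apply, smul_eq_mul,
    mul_dvd_mul_iff_left hp] at hij

lemma exists_memNullDvd_not_C_dvd_of_pow {p : D} (hp : p ≠ 0) (k : ℕ) {f : D[X]}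
    (hf : memNullDvd A (p ^ (k + 1)) f) (hfp : ¬ C (p ^ (k + 1)) ∣ f) :
    ∃ g : D[X], memNullDvd A p g ∧ ¬ C p ∣ g ∧ g.degree ≤ f.degree := by
  induction k generalizing f with
  | zero => exact ⟨f, by simpa using hf, by simpa using hfp, le_rfl⟩
  | succ k ih =>
    by_cases hpf : C p ∣ f
    · obtain ⟨g, rfl⟩ := hpf
      have hg : memNullDvd A (p ^ (k + 1)) g := (pow_succ' p (k + 1) ▸ hf).of_C_mul hp
      have hgp : ¬ C (p ^ (k + 1)) ∣ g := fun hdvd ↦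
        hfp (by rw [pow_succ', C_mul]; exact mul_dvd_mul_left _ hdvd)
      rw [degree_C_mul hp]
      exact ih hg hgp
    · exact ⟨f, hf.of_dvd_s2 (dvd_pow_self p (by omega)), hpf, le_rfl⟩

end IsDomain

lemma IsMinPolyMod.degree_le_of_not_C_dvd {D : Type*} [CommRing D] [IsPrincipalIdealRing D]
    {p : D} (hp : Irreducible p) {n : ℕ}
    {A : Matrix (Fin n) (Fin n) D} {ν g : D[X]} (hν : IsMinPolyMod A p ν)
    (hg : memNullDvd A p g) (hgp : ¬ C p ∣ g) : ν.degree ≤ g.degree := by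
  have : (Ideal.span {p}).IsMaximal := PrincipalIdealRing.isMaximal_of_irreducible hp
  let := Ideal.Quotient.field (Ideal.span {p})
  let φ := Ideal.Quotient.mk (Ideal.span {p})
  let μ := minpoly (D ⧸ Ideal.span {p}) (A.map φ)
  have hgφ : g.map φ ≠ 0 := fun h0 ↦ hgp <| (C_dvd_iff_dvd_coeff p g).2 fun i ↦ by
    simpa [← Ideal.Quotient.eq_zero_iff_dvd] using congr_arg (coeff · i) h0
  have hμ_dvd : μ ∣ g.map φ :=
    minpoly.dvd (D ⧸ Ideal.span {p}) _ (memNullDvd_iff_aeval_map_eq_zero.1 hg)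
  have hμg : μ.degree ≤ g.degree := (degree_le_of_dvd hμ_dvd hgφ).trans degree_map_le
  obtain ⟨m, hmμ, hmdeg, hmonic⟩ := lifts_and_degree_eq_and_monic
    (map_surjective φ Ideal.Quotient.mk_surjective μ) (minpoly.monic (.of_finite _ _))
  have hm : memNullDvd A p m := memNullDvd_iff_aeval_map_eq_zero.2 <|
    (congr_arg (aeval (A.map φ)) hmμ).trans (minpoly.aeval _ _)
  exact (hν.2.2 m hmonic hm).trans (hmdeg ▸ hμg)

/-- If `p` is prime, `ℓ ≥ 1`, `f ∈ N_{(p^ℓ)}(A)` and `f ∉ p^ℓ·D[X]`, then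
`deg f ≥ d_p(A)`, where the `p`-degree `d_p(A)` is the degree of a `(p)`-minimal polynomial
`ν₁` of `A`. -/
theorem stmt2 {D : Type*} [CommRing D] [IsDomain D] [IsPrincipalIdealRing D]
    (p : D) (hp : Prime p) (ℓ : ℕ) (hℓ : 1 ≤ ℓ)
    {n : ℕ} (A : Matrix (Fin n) (Fin n) D)
    (ν₁ : Polynomial D) (hν₁ : IsMinPolyMod A p ν₁)
    (f : Polynomial D) (hf : memNullDvd A (p ^ ℓ) f)
    (hfp : ¬ ∃ h : Polynomial D, f = Polynomial.C (p ^ ℓ) * h) :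
    ν₁.degree ≤ f.degree := by
  obtain ⟨k, rfl⟩ := Nat.exists_eq_add_of_le' hℓ
  obtain ⟨g, hg, hgp, hgf⟩ := exists_memNullDvd_not_C_dvd_of_pow hp.ne_zero k hf hfp
  exact (hν₁.degree_le_of_not_C_dvd hp.irreducible hg hgp).trans hgf
end

section
/- Let D be a principal ideal domain, p ∈ D a prime element, A an n×n matrix over D, ℓ ≥ 0, and let ν_j ∈ D[X] be (p^j)-minimal polynomials of A for 0 ≤ j ≤ ℓ (with ν_0 = 1). Then N_{(p^ℓ)}(A) = Σ_{j=0}^{ℓ} p^{ℓ-j}·ν_j·D[X]. -/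
open Polynomial

theorem Polynomial.Monic.natDegree_le_of_dvd {R : Type*} [Semiring R] {q f : R[X]}
    (hq : q.Monic) (h : q ∣ f) (hf : f ≠ 0) : q.natDegree ≤ f.natDegree := by
  obtain ⟨c, rfl⟩ := h
  have hc : c ≠ 0 := by rintro rfl; exact hf (mul_zero q)
  rw [hq.natDegree_mul' hc]
  exact Nat.le_add_right _ _

theorem Polynomial.map_mk_span_singleton_eq_zero_iff {R : Type*} [CommRing R] (p : R)
    (f : R[X]) : f.map (Ideal.Quotient.mk (Ideal.span {p})) = 0 ↔ C p ∣ f := by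
  simp [Polynomial.ext_iff, Ideal.Quotient.eq_zero_iff_mem, Ideal.mem_span_singleton,
    C_dvd_iff_dvd_coeff]

theorem Ideal.le_of_forall_exists_leadingTerm {R : Type*} [Ring R] {I J : Ideal R[X]}
    (hJI : J ≤ I)
    (h : ∀ f ∈ I, f ≠ 0 → f ∉ J →
      ∃ g ∈ J, g.degree = f.degree ∧ g.leadingCoeff = f.leadingCoeff) :
    I ≤ J := by
  intro f hf
  induction hd : f.degree using WellFoundedLT.induction generalizing f with
  | ind d ih =>
    by_contra hfJ
    have hf0 : f ≠ 0 := by rintro rfl; exact hfJ J.zero_mem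
    obtain ⟨g, hgJ, hdeg, hlc⟩ := h f hf hf0 hfJ
    have hlt : (f - g).degree < d := hd ▸ degree_sub_lt_left hdeg.symm hf0 hlc.symm
    have hsub : f - g ∈ J := ih _ hlt (I.sub_mem hf (hJI hgJ)) rfl
    exact hfJ (by simpa using J.add_mem hsub hgJ)

section NullIdeal

variable {D : Type*} [CommRing D] {n : ℕ} (A : Matrix (Fin n) (Fin n) D)

def nullIdeal (d : D) : Ideal D[X] where
  carrier := {f | memNullDvd A d f}
  zero_mem' := ⟨0, by simp⟩
  add_mem' := by
    rintro f g ⟨B, hB⟩ ⟨B', hB'⟩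
    exact ⟨B + B', by rw [map_add, hB, hB', smul_add]⟩
  smul_mem' := by
    rintro g f ⟨B, hB⟩
    exact ⟨aeval A g * B, by rw [smul_eq_mul, map_mul, hB, mul_smul_comm]⟩

variable {A}

theorem mem_nullIdeal {d : D} {f : D[X]} : f ∈ nullIdeal A d ↔ memNullDvd A d f := Iff.rfl

theorem C_mem_nullIdeal (d : D) : C d ∈ nullIdeal A d :=
  ⟨1, by rw [aeval_C, Algebra.algebraMap_eq_smul_one]⟩

theorem nullIdeal_le_of_dvd {d e : D} (h : d ∣ e) : nullIdeal A e ≤ nullIdeal A d := by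
  obtain ⟨c, rfl⟩ := h
  rintro f ⟨B, hB⟩
  exact ⟨c • B, by rw [hB, smul_smul]⟩

theorem C_mul_mem_nullIdeal (e : D) {d : D} {f : D[X]} (hf : f ∈ nullIdeal A d) :
    C e * f ∈ nullIdeal A (e * d) := by
  obtain ⟨B, hB⟩ := hf
  exact ⟨B, by rw [map_mul, hB, aeval_C, ← Algebra.smul_def, smul_smul]⟩

theorem mem_nullIdeal_of_C_mul_mem [IsDomain D] {e d : D} {f : D[X]} (he : e ≠ 0)
    (h : C e * f ∈ nullIdeal A (e * d)) : f ∈ nullIdeal A d := by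
  obtain ⟨B, hB⟩ := h
  refine ⟨B, smul_right_injective _ he ?_⟩
  change e • aeval A f = e • d • B
  rw [smul_smul, ← hB, map_mul, aeval_C, Algebra.smul_def]

theorem IsMinPolyMod.natDegree_le_of_isCoprime {d : D} {ν f : D[X]} (hν : IsMinPolyMod A d ν)
    (hf : f ∈ nullIdeal A d) (hcop : IsCoprime f.leadingCoeff d) :
    ν.natDegree ≤ f.natDegree := by
  obtain ⟨b, c, hbc⟩ := hcop
  set m := f.natDegree
  set g := C b * f + C c * X ^ m * C d
  have hgN : g ∈ nullIdeal A d :=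
    add_mem (Ideal.mul_mem_left _ _ hf) (Ideal.mul_mem_left _ _ (C_mem_nullIdeal d))
  have hle : g.natDegree ≤ m := by
    refine natDegree_add_le_of_degree_le (natDegree_C_mul_le _ _) ?_
    rw [mul_comm, ← mul_assoc, ← C_mul]
    exact natDegree_C_mul_X_pow_le _ _
  have hcoeff : g.coeff m = 1 := by
    rw [← hbc, coeff_add, coeff_C_mul, mul_right_comm, ← C_mul, coeff_C_mul_X_pow, if_pos rfl]
    rfl
  exact (natDegree_le_natDegree (hν.2.2 g (monic_of_natDegree_le_of_coeff_eq_one m hle hcoeff)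
    hgN)).trans hle

end NullIdeal

section MinPolySpan

variable {D : Type*} [CommRing D]

noncomputable def minPolySpan (p : D) (ν : ℕ → D[X]) (K : ℕ) : Ideal D[X] :=
  Ideal.span ((fun j => C (p ^ (K - j)) * ν j) '' ↑(Finset.range (K + 1)))

variable {p : D} {ν : ℕ → D[X]} {K : ℕ} {f : D[X]}

theorem mem_minPolySpan_iff :
    f ∈ minPolySpan p ν K ↔
      ∃ c : ℕ → D[X], f = ∑ j ∈ Finset.range (K + 1), C (p ^ (K - j)) * ν j * c j := by
  rw [minPolySpan, Submodule.mem_span_image_finset_iff_exists_fun']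
  simp only [smul_eq_mul, mul_comm, eq_comm]

theorem minPolySpan_le_nullIdeal {n : ℕ} {A : Matrix (Fin n) (Fin n) D}
    (hν : ∀ j ≤ K, ν j ∈ nullIdeal A (p ^ j)) : minPolySpan p ν K ≤ nullIdeal A (p ^ K) := by
  refine Ideal.span_le.2 ?_
  rintro _ ⟨j, hj, rfl⟩
  have hjK : j ≤ K := Nat.lt_succ_iff.1 (Finset.mem_range.1 hj)
  simpa only [SetLike.mem_coe, ← pow_add, Nat.sub_add_cancel hjK] using
    C_mul_mem_nullIdeal (p ^ (K - j)) (hν j hjK)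

theorem C_mul_mem_minPolySpan_succ (hf : f ∈ minPolySpan p ν K) :
    C p * f ∈ minPolySpan p ν (K + 1) := by
  suffices minPolySpan p ν K ≤
      Submodule.comap (LinearMap.mulLeft D[X] (C p)) (minPolySpan p ν (K + 1)) from this hf
  refine Ideal.span_le.2 ?_
  rintro _ ⟨j, hj, rfl⟩
  have hjK : j ≤ K := Nat.lt_succ_iff.1 (Finset.mem_range.1 hj)
  refine Ideal.subset_span ⟨j, Finset.mem_range.2 (by omega), ?_⟩
  simp only [LinearMap.mulLeft_apply, ← mul_assoc, ← C_mul, ← pow_succ', Nat.succ_sub hjK]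

theorem map_dvd_map_of_mem_minPolySpan (hf : f ∈ minPolySpan p ν K) :
    (ν K).map (Ideal.Quotient.mk (Ideal.span {p})) ∣
      f.map (Ideal.Quotient.mk (Ideal.span {p})) := by
  rw [← Ideal.mem_span_singleton, ← coe_mapRingHom, ← Ideal.mem_comap]
  refine (Ideal.span_le.2 ?_) hf
  rintro _ ⟨j, hj, rfl⟩
  rw [SetLike.mem_coe, Ideal.mem_comap, coe_mapRingHom, Polynomial.map_mul, map_C]
  rcases (Nat.lt_succ_iff_lt_or_eq.1 (Finset.mem_range.1 hj)) with hjK | rfl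
  · rw [Ideal.Quotient.eq_zero_iff_mem.2 (Ideal.mem_span_singleton.2 (dvd_pow_self p (by omega))),
      C_0, zero_mul]
    exact Ideal.zero_mem _
  · rw [Nat.sub_self, pow_zero, map_one, C_1, one_mul]
    exact Ideal.mem_span_singleton_self _

theorem natDegree_le_of_mem_minPolySpan (hmon : (ν K).Monic) (hf : f ∈ minPolySpan p ν K)
    (hmap : f.map (Ideal.Quotient.mk (Ideal.span {p})) ≠ 0) : (ν K).natDegree ≤ f.natDegree := by
  have : Nontrivial (D ⧸ Ideal.span {p}) := Polynomial.nontrivial_iff.1 (nontrivial_of_ne _ _ hmap)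
  calc (ν K).natDegree = ((ν K).map (Ideal.Quotient.mk (Ideal.span {p}))).natDegree :=
        (hmon.natDegree_map _).symm
    _ ≤ (f.map (Ideal.Quotient.mk (Ideal.span {p}))).natDegree :=
        (hmon.map _).natDegree_le_of_dvd (map_dvd_map_of_mem_minPolySpan hf) hmap
    _ ≤ f.natDegree := natDegree_map_le

theorem exists_mem_minPolySpan_leadingTerm {j : ℕ} (hj : j ≤ K) (hmon : (ν j).Monic)
    (hdeg : (ν j).natDegree ≤ f.natDegree) (hdvd : p ^ (K - j) ∣ f.leadingCoeff) (hf0 : f ≠ 0) :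
    ∃ g ∈ minPolySpan p ν K, g.degree = f.degree ∧ g.leadingCoeff = f.leadingCoeff := by
  have : Nontrivial D := Polynomial.nontrivial_iff.1 (nontrivial_of_ne _ _ hf0)
  set s := f.natDegree - (ν j).natDegree
  refine ⟨C f.leadingCoeff * X ^ s * ν j, ?_, ?_, ?_⟩
  · obtain ⟨u, hu⟩ := hdvd
    have hgen : C (p ^ (K - j)) * ν j ∈ minPolySpan p ν K :=
      Ideal.subset_span ⟨j, Finset.mem_range.2 (by omega), rfl⟩
    convert Ideal.mul_mem_right (C u * X ^ s) _ hgen using 1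
    rw [hu, C_mul]
    ring
  · rw [hmon.degree_mul, degree_C_mul_X_pow s (leadingCoeff_ne_zero.2 hf0),
      degree_eq_natDegree hmon.ne_zero, degree_eq_natDegree hf0]
    norm_cast
    omega
  · rw [leadingCoeff_mul_monic hmon, leadingCoeff_C_mul_X_pow]

end MinPolySpan

section Main

variable {D : Type*} [CommRing D] [IsDomain D] [IsPrincipalIdealRing D] {p : D} {n : ℕ}
  {A : Matrix (Fin n) (Fin n) D} {ν : ℕ → D[X]}

theorem nullIdeal_le_minPolySpan_of_forall_lt (hp : Prime p) {K : ℕ}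
    (hν : ∀ j ≤ K, IsMinPolyMod A (p ^ j) (ν j))
    (hlow : ∀ m < K, nullIdeal A (p ^ m) ≤ minPolySpan p ν m) :
    nullIdeal A (p ^ K) ≤ minPolySpan p ν K := by
  refine Ideal.le_of_forall_exists_leadingTerm
    (minPolySpan_le_nullIdeal fun j hj => (hν j hj).2.1) fun f hf hf0 hfJ => ?_
  by_cases hcop : IsCoprime f.leadingCoeff (p ^ K)
  · exact exists_mem_minPolySpan_leadingTerm le_rfl (hν K le_rfl).1
      ((hν K le_rfl).natDegree_le_of_isCoprime hf hcop) (by simp) hf0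
  obtain ⟨k, rfl⟩ : ∃ k, K = k + 1 :=
    Nat.exists_eq_succ_of_ne_zero (by rintro rfl; exact hcop (by simp [isCoprime_one_right]))
  have hpa : p ∣ f.leadingCoeff := by
    by_contra h
    exact hcop (hp.irreducible.coprime_pow_of_not_dvd _ h)
  have hmap : f.map (Ideal.Quotient.mk (Ideal.span {p})) ≠ 0 := by
    rw [Ne, map_mk_span_singleton_eq_zero_iff]
    rintro ⟨g, rfl⟩
    refine hfJ (C_mul_mem_minPolySpan_succ (hlow k k.lt_succ_self ?_))
    exact mem_nullIdeal_of_C_mul_mem hp.ne_zero (by rwa [← pow_succ'])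
  have hfk : f ∈ minPolySpan p ν k :=
    hlow k k.lt_succ_self (nullIdeal_le_of_dvd (pow_dvd_pow p k.le_succ) hf)
  exact exists_mem_minPolySpan_leadingTerm k.le_succ (hν k k.le_succ).1
    (natDegree_le_of_mem_minPolySpan (hν k k.le_succ).1 hfk hmap) (by simpa using hpa) hf0

theorem nullIdeal_le_minPolySpan (hp : Prime p) {ℓ : ℕ}
    (hν : ∀ j ≤ ℓ, IsMinPolyMod A (p ^ j) (ν j)) {K : ℕ} (hK : K ≤ ℓ) :
    nullIdeal A (p ^ K) ≤ minPolySpan p ν K := by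
  induction K using Nat.strong_induction_on with
  | _ K ih =>
    exact nullIdeal_le_minPolySpan_of_forall_lt hp (fun j hj => hν j (hj.trans hK))
      fun m hm => ih m hm (hm.le.trans hK)

end Main

theorem stmt5_general {D : Type*} [CommRing D] [IsDomain D] [IsPrincipalIdealRing D]
    (p : D) (hp : Prime p) (ℓ : ℕ)
    {n : ℕ} (A : Matrix (Fin n) (Fin n) D)
    (ν : ℕ → Polynomial D)
    (hν : ∀ j, j ≤ ℓ → IsMinPolyMod A (p ^ j) (ν j)) :
    ∀ f : Polynomial D, memNullDvd A (p ^ ℓ) f ↔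
      ∃ c : ℕ → Polynomial D,
        f = ∑ j ∈ Finset.range (ℓ + 1), Polynomial.C (p ^ (ℓ - j)) * ν j * c j := by
  intro f
  rw [← mem_nullIdeal, ← mem_minPolySpan_iff]
  exact ⟨fun hf => nullIdeal_le_minPolySpan hp hν le_rfl hf,
    fun hf => minPolySpan_le_nullIdeal (fun j hj => (hν j hj).2.1) hf⟩

/-- Let `p` be prime, `ℓ ≥ 0`, and `ν_j` `(p^j)`-minimal polynomials of `A`
for `0 ≤ j ≤ ℓ` (with `ν_0 = 1`). Then `N_{(p^ℓ)}(A) = Σ_{j=0}^{ℓ} p^{ℓ-j}·ν_j·D[X]`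
(stated elementwise). -/
theorem stmt5 {D : Type*} [CommRing D] [IsDomain D] [IsPrincipalIdealRing D]
    (p : D) (hp : Prime p) (ℓ : ℕ)
    {n : ℕ} (A : Matrix (Fin n) (Fin n) D)
    (ν : ℕ → Polynomial D) (hν0 : ν 0 = 1)
    (hν : ∀ j, j ≤ ℓ → IsMinPolyMod A (p ^ j) (ν j)) :
    ∀ f : Polynomial D, memNullDvd A (p ^ ℓ) f ↔
      ∃ c : ℕ → Polynomial D,
        f = ∑ j ∈ Finset.range (ℓ + 1), Polynomial.C (p ^ (ℓ - j)) * ν j * c j :=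
  stmt5_general p hp ℓ A ν hν
end

section
/- Let D be a principal ideal domain, p ∈ D a prime element, and A an n×n matrix over D with minimal polynomial μ_A ∈ D[X]. Then there exists m ∈ ℕ such that for all k ≥ 0: N_{(p^{m+k})}(A) = μ_A·D[X] + p^k·N_{(p^m)}(A). -/
/-!
The kernel of `f ↦ f(A)` on `D[X]` is `μ_A·D[X]`: the minimal polynomial over `K` divides `f`,
and since `μ_A` is monic this divisibility descends from `K[X]` to `D[X]`. The inclusion `⊇` is
then immediate. For `⊆`, apply Artin–Rees to the ideal `(p)` and the submodule `D[A]` of the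
finite module `M_n(D)`: for some `m`, every `f(A) ∈ p^{m+k}·M_n(D)` equals `p^k·h(A)` with
`h(A) ∈ p^m·M_n(D)`, and `f - p^k·h` lies in the kernel.
-/

open Polynomial Pointwise

theorem Submodule.mem_smul_top_iff_exists {R M : Type*} [CommRing R] [AddCommGroup M] [Module R M]
    (a : R) (x : M) : x ∈ a • (⊤ : Submodule R M) ↔ ∃ z, x = a • z := by
  simp [mem_smul_pointwise_iff_exists, eq_comm]

theorem Submodule.exists_pow_add_smul_top_inf_eq {R M : Type*} [CommRing R] [IsNoetherianRing R]
    [AddCommGroup M] [Module R M] [Module.Finite R M] (N : Submodule R M) (p : R) :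
    ∃ m, ∀ k, (p ^ (m + k)) • ⊤ ⊓ N = p ^ k • ((p ^ m) • ⊤ ⊓ N) := by
  obtain ⟨m, hm⟩ := (Ideal.span {p}).exists_pow_inf_eq_pow_smul N
  refine ⟨m, fun k => ?_⟩
  simpa [Ideal.span_singleton_pow, Submodule.ideal_span_singleton_smul] using hm (m + k) (by omega)

section MinpolyDescent

variable {D K : Type*} [CommRing D] [Field K] [Algebra D K] {n : ℕ}
  {A : Matrix (Fin n) (Fin n) D} {μ : D[X]}

theorem Matrix.aeval_map_algebraMap (A : Matrix (Fin n) (Fin n) D) (f : D[X]) :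
    aeval (A.map (algebraMap D K)) f = (aeval A f).map (algebraMap D K) :=
  aeval_algHom_apply (Algebra.ofId D K).mapMatrix A f

theorem monic_of_map_eq_minpoly (hinj : Function.Injective (algebraMap D K))
    (hμ : μ.map (algebraMap D K) = minpoly K (A.map (algebraMap D K))) : μ.Monic :=
  monic_of_injective hinj (hμ ▸ minpoly.monic (IsIntegral.of_finite K _))

theorem aeval_eq_zero_iff_dvd_of_map_eq_minpoly (hinj : Function.Injective (algebraMap D K))
    (hμ : μ.map (algebraMap D K) = minpoly K (A.map (algebraMap D K))) (f : D[X]) :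
    aeval A f = 0 ↔ μ ∣ f := by
  rw [← map_dvd_map _ hinj (monic_of_map_eq_minpoly hinj hμ), hμ, minpoly.dvd_iff,
    aeval_map_algebraMap, Matrix.aeval_map_algebraMap,
    (Matrix.map_injective hinj).eq_iff' (Matrix.map_zero _ (map_zero _))]

end MinpolyDescent

theorem stmt9_general {D : Type*} [CommRing D] [IsPrincipalIdealRing D]
    (K : Type*) [Field K] [Algebra D K] [IsFractionRing D K]
    (p : D)
    {n : ℕ} (A : Matrix (Fin n) (Fin n) D)
    (μ : Polynomial D)
    (hμ : μ.map (algebraMap D K) = minpoly K (A.map (algebraMap D K))) :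
    ∃ m : ℕ, ∀ k : ℕ, ∀ f : Polynomial D,
      memNullDvd A (p ^ (m + k)) f ↔
        ∃ g h : Polynomial D, memNullDvd A (p ^ m) h ∧
          f = μ * g + Polynomial.C (p ^ k) * h := by
  have hker := aeval_eq_zero_iff_dvd_of_map_eq_minpoly (IsFractionRing.injective D K) hμ
  obtain ⟨m, hm⟩ := Submodule.exists_pow_add_smul_top_inf_eq (aeval A).range.toSubmodule p
  refine ⟨m, fun k f => ⟨fun ⟨B, hB⟩ => ?_, ?_⟩⟩
  · have hf : aeval A f ∈ (p ^ (m + k)) • ⊤ ⊓ (aeval A).range.toSubmodule :=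
      ⟨(Submodule.mem_smul_top_iff_exists _ _).2 ⟨B, hB⟩, f, rfl⟩
    obtain ⟨_, ⟨hB', h, rfl⟩, hfh⟩ := (Submodule.mem_smul_pointwise_iff_exists _ _ _).1 (hm k ▸ hf)
    obtain ⟨g, hg⟩ := (hker (f - C (p ^ k) * h)).1 (by
      rw [map_sub, map_mul, aeval_C, ← Algebra.smul_def]; exact sub_eq_zero.2 hfh.symm)
    exact ⟨g, h, (Submodule.mem_smul_top_iff_exists _ _).1 hB', by rw [← hg]; ring⟩
  · rintro ⟨g, h, ⟨B, hB⟩, rfl⟩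
    refine ⟨B, ?_⟩
    rw [map_add, map_mul, map_mul, (hker μ).2 dvd_rfl, zero_mul, aeval_C, ← Algebra.smul_def,
      hB, smul_smul, ← pow_add, zero_add, add_comm k m]

/-- Let `D` be a PID with quotient field `K`, `p ∈ D` prime, and `A` a square
matrix over `D` whose minimal polynomial over `K` is (the image of) `μ_A ∈ D[X]`. Then there
is `m ∈ ℕ` such that for all `k ≥ 0`:
`N_{(p^{m+k})}(A) = μ_A·D[X] + p^k·N_{(p^m)}(A)` (stated elementwise). -/
theorem stmt9 {D : Type*} [CommRing D] [IsDomain D] [IsPrincipalIdealRing D]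
    (K : Type*) [Field K] [Algebra D K] [IsFractionRing D K]
    (p : D) (hp : Prime p)
    {n : ℕ} (A : Matrix (Fin n) (Fin n) D)
    (μ : Polynomial D)
    (hμ : μ.map (algebraMap D K) = minpoly K (A.map (algebraMap D K))) :
    ∃ m : ℕ, ∀ k : ℕ, ∀ f : Polynomial D,
      memNullDvd A (p ^ (m + k)) f ↔
        ∃ g h : Polynomial D, memNullDvd A (p ^ m) h ∧
          f = μ * g + Polynomial.C (p ^ k) * h :=
  stmt9_general K p A μ hμ
end

section
/- Let D be a principal ideal domain, p ∈ D a prime element, ℓ ≥ 1, and A = diag(a_1, …, a_n) a diagonal matrix over D with S = {a_1, …, a_n}. Let (b_j)_{j≥0} be a sequence in S such that for every j ≥ 0 and every a ∈ S, v_p((b_j − b_0)···(b_j − b_{j−1})) ≤ v_p((a − b_0)···(a − b_{j−1})), where v_p denotes the p-adic valuation on D. Let k be minimal such that v_p((b_k − b_0)···(b_k − b_{k−1})) ≥ ℓ. Then f_k = (X − b_0)(X − b_1)···(X − b_{k−1}) is a (p^ℓ)-minimal polynomial of A. -/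
open Polynomial Finset Lagrange

theorem Matrix.aeval_diagonal {R ι : Type*} [CommRing R] [Fintype ι] [DecidableEq ι]
    (a : ι → R) (f : R[X]) :
    aeval (Matrix.diagonal a) f = Matrix.diagonal fun i => f.eval (a i) := by
  rw [← Matrix.diagonalAlgHom_apply (R := R), aeval_algHom_apply, Matrix.diagonalAlgHom_apply]
  congr 1
  funext i
  rw [aeval_fn_apply, coe_aeval_eq_eval]

theorem memNullDvd_diagonal_iff {D : Type*} [CommRing D] {n : ℕ} (a : Fin n → D) (d : D)
    (f : D[X]) : memNullDvd (Matrix.diagonal a) d f ↔ ∀ i, d ∣ f.eval (a i) := by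
  simp only [memNullDvd, Matrix.aeval_diagonal]
  constructor
  · rintro ⟨B, hB⟩ i
    exact ⟨B i i, by simpa using congrFun (congrFun hB i) i⟩
  · intro h
    choose e he using h
    exact ⟨Matrix.diagonal e, by rw [← Matrix.diagonal_smul]; congr; funext i; exact he i⟩

theorem Prime.pow_dvd_mul_of_forall_pow_dvd {α : Type*} [CommMonoidWithZero α]
    [IsCancelMulZero α] {p c u v : α} (hp : Prime p) (huv : ∀ m : ℕ, p ^ m ∣ u → p ^ m ∣ v) {ℓ : ℕ}
    (h : p ^ ℓ ∣ c * u) : p ^ ℓ ∣ c * v := by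
  rw [pow_dvd_iff_le_emultiplicity, emultiplicity_mul hp] at h ⊢
  exact h.trans (add_le_add le_rfl (emultiplicity_le_emultiplicity_iff.2 huv))

theorem exists_eq_sum_C_mul_nodal {R : Type*} [CommRing R] [Nontrivial R] (b : ℕ → R)
    {m : ℕ} {g : R[X]} (hg : g.natDegree ≤ m) :
    ∃ c : ℕ → R, g = ∑ j ∈ range (m + 1), C (c j) * nodal (range j) b ∧ c m = g.coeff m := by
  induction m generalizing g with
  | zero => exact ⟨fun _ => g.coeff 0, by simpa using eq_C_of_natDegree_le_zero hg, rfl⟩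
  | succ m ih =>
    set h := g - C (g.coeff (m + 1)) * nodal (range (m + 1)) b
    have hdeg : (nodal (range (m + 1)) b).natDegree = m + 1 := by simp [natDegree_nodal]
    have hlead : (nodal (range (m + 1)) b).coeff (m + 1) = 1 := by
      simpa [hdeg] using (nodal_monic (s := range (m + 1)) (v := b)).coeff_natDegree
    have hh : h.natDegree ≤ m := by
      rw [natDegree_le_iff_coeff_eq_zero]
      intro N hmN
      rcases (Nat.succ_le_of_lt hmN).eq_or_lt with rfl | hlt
      · simp [h, hlead]
      · have hN : (nodal (range (m + 1)) b).coeff N = 0 :=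
          coeff_eq_zero_of_natDegree_lt (by omega)
        simp [h, coeff_eq_zero_of_natDegree_lt (hg.trans_lt hlt), hN]
    obtain ⟨c, hc, -⟩ := ih hh
    refine ⟨Function.update c (m + 1) (g.coeff (m + 1)), ?_, Function.update_self ..⟩
    rw [sum_range_succ, Function.update_self]
    have hupdate : ∀ j ∈ range (m + 1), Function.update c (m + 1) (g.coeff (m + 1)) j = c j :=
      fun j hj => Function.update_of_ne (mem_range.1 hj).ne ..
    rw [sum_congr rfl fun j hj => by rw [hupdate j hj], ← hc]
    ring

theorem eval_sum_C_mul_nodal_range {R : Type*} [CommRing R] (b c : ℕ → R) {j M : ℕ}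
    (hj : j < M) :
    (∑ i ∈ range M, C (c i) * nodal (range i) b).eval (b j) =
      ∑ i ∈ range j, c i * ∏ t ∈ range i, (b j - b t) + c j * ∏ t ∈ range j, (b j - b t) := by
  simp only [← sum_range_succ (fun i => c i * ∏ t ∈ range i, (b j - b t)), eval_finsetSum,
    eval_mul, eval_C, eval_nodal]
  refine (sum_subset (range_subset_range.2 hj) fun i _ hij => ?_).symm
  rw [prod_eq_zero (mem_range.2 (by rw [mem_range] at hij; omega)) (sub_self (b j)), mul_zero]

/-- Bhargava's `p`-ordering, with `v_p u ≤ v_p v` encoded as `∀ m, p ^ m ∣ u → p ^ m ∣ v`. -/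
def IsPOrdering {D : Type*} [CommRing D] (p : D) (S : Set D) (b : ℕ → D) : Prop :=
  (∀ j, b j ∈ S) ∧ ∀ j, ∀ x ∈ S, ∀ m : ℕ,
    p ^ m ∣ ∏ t ∈ range j, (b j - b t) → p ^ m ∣ ∏ t ∈ range j, (x - b t)

theorem IsPOrdering.pow_dvd_coeff_mul_prod {D : Type*} [CommRing D] [IsDomain D] {p : D}
    (hp : Prime p) {S : Set D} {b : ℕ → D} (hb : IsPOrdering p S b) {ℓ M : ℕ} (c : ℕ → D)
    (hS : ∀ x ∈ S, p ^ ℓ ∣ (∑ i ∈ range M, C (c i) * nodal (range i) b).eval x) :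
    ∀ j < M, ∀ x ∈ S, p ^ ℓ ∣ c j * ∏ t ∈ range j, (x - b t) := by
  intro j
  induction j using Nat.strong_induction_on with
  | _ j ih =>
    intro hj x hx
    have hbj : p ^ ℓ ∣ c j * ∏ t ∈ range j, (b j - b t) := by
      have hlower : p ^ ℓ ∣ ∑ i ∈ range j, c i * ∏ t ∈ range i, (b j - b t) :=
        dvd_sum fun i hi => ih i (mem_range.1 hi) ((mem_range.1 hi).trans hj) (b j) (hb.1 j)
      have hsum := hS (b j) (hb.1 j)
      rw [eval_sum_C_mul_nodal_range b c hj] at hsum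
      exact (dvd_add_right hlower).1 hsum
    exact hp.pow_dvd_mul_of_forall_pow_dvd (hb.2 j x hx) hbj

theorem stmt10_general {D : Type*} [CommRing D] [IsDomain D]
    (p : D) (hp : Prime p) (ℓ : ℕ)
    {n : ℕ} (a : Fin n → D)
    (b : ℕ → D) (hbS : ∀ j, b j ∈ Set.range a)
    (hord : ∀ j : ℕ, ∀ x ∈ Set.range a, ∀ m : ℕ,
      p ^ m ∣ ∏ t ∈ Finset.range j, (b j - b t) →
        p ^ m ∣ ∏ t ∈ Finset.range j, (x - b t))
    (k : ℕ)
    (hk : p ^ ℓ ∣ ∏ t ∈ Finset.range k, (b k - b t))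
    (hkmin : ∀ k' < k, ¬ p ^ ℓ ∣ ∏ t ∈ Finset.range k', (b k' - b t)) :
    IsMinPolyMod (Matrix.diagonal a) (p ^ ℓ)
      (∏ t ∈ Finset.range k, (Polynomial.X - Polynomial.C (b t))) := by
  have hb : IsPOrdering p (Set.range a) b := ⟨hbS, hord⟩
  show IsMinPolyMod _ _ (nodal (range k) b)
  refine ⟨nodal_monic, ?_, fun g hg hgA => ?_⟩
  · rw [memNullDvd_diagonal_iff]
    intro i
    rw [eval_nodal]
    exact hord k _ ⟨i, rfl⟩ ℓ hk
  by_contra! hlt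
  have hm : g.natDegree < k := by
    simpa [natDegree_nodal] using natDegree_lt_natDegree hg.ne_zero hlt
  obtain ⟨c, hgc, hc⟩ := exists_eq_sum_C_mul_nodal b (le_refl g.natDegree)
  have hS : ∀ x ∈ Set.range a, p ^ ℓ ∣ (∑ i ∈ range (g.natDegree + 1),
      C (c i) * nodal (range i) b).eval x := by
    rw [← hgc]
    rintro _ ⟨i, rfl⟩
    exact (memNullDvd_diagonal_iff a _ g).1 hgA i
  have hpm := hb.pow_dvd_coeff_mul_prod hp c hS g.natDegree g.natDegree.lt_succ_self
    (b g.natDegree) (hbS _)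
  rw [hc, hg.coeff_natDegree, one_mul] at hpm
  exact hkmin _ hm hpm

/-- Let `p ∈ D` be prime, `ℓ ≥ 1`, and `A = diag(a_1, …, a_n)` a diagonal
matrix with set of diagonal entries `S = range a`. Let `(b_j)` be a `p`-ordering of `S`,
i.e. a sequence in `S` such that for all `j` and all `x ∈ S`,
`v_p((b_j − b_0)⋯(b_j − b_{j−1})) ≤ v_p((x − b_0)⋯(x − b_{j−1}))` (expressed via divisibility
by powers of `p`). If `k` is minimal with `v_p((b_k − b_0)⋯(b_k − b_{k−1})) ≥ ℓ`, then
`f_k = (X − b_0)⋯(X − b_{k−1})` is a `(p^ℓ)`-minimal polynomial of `A`. -/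
theorem stmt10 {D : Type*} [CommRing D] [IsDomain D] [IsPrincipalIdealRing D]
    (p : D) (hp : Prime p) (ℓ : ℕ) (hℓ : 1 ≤ ℓ)
    {n : ℕ} (a : Fin n → D)
    (b : ℕ → D) (hbS : ∀ j, b j ∈ Set.range a)
    (hord : ∀ j : ℕ, ∀ x ∈ Set.range a, ∀ m : ℕ,
      p ^ m ∣ ∏ t ∈ Finset.range j, (b j - b t) →
        p ^ m ∣ ∏ t ∈ Finset.range j, (x - b t))
    (k : ℕ)
    (hk : p ^ ℓ ∣ ∏ t ∈ Finset.range k, (b k - b t))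
    (hkmin : ∀ k' < k, ¬ p ^ ℓ ∣ ∏ t ∈ Finset.range k', (b k' - b t)) :
    IsMinPolyMod (Matrix.diagonal a) (p ^ ℓ)
      (∏ t ∈ Finset.range k, (Polynomial.X - Polynomial.C (b t))) :=
  stmt10_general p hp ℓ a b hbS hord k hk hkmin
end

section
/- Let D be a principal ideal domain with quotient field K and A an n×n matrix over D with minimal polynomial μ_A ∈ D[X]. The following are equivalent: (1) Int(A, M_n(D)) = μ_A·K[X] + D[X]; (2) every f ∈ Int(A, M_n(D)) with f ∉ D[X] satisfies deg(f) ≥ deg(μ_A); (3) the ring of images {f(A) : f ∈ Int(A, M_n(D))} equals D[A]. -/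
/-- `f ∈ Int(A, M_n(D))`: the polynomial `f ∈ K[X]` is integer-valued on `A`, i.e. `f(A)`
(computed in `M_n(K)`) has all entries in (the image of) `D`. -/
def IsIntValuedOn {D K : Type*} [CommRing D] [CommRing K] [Algebra D K] {n : ℕ}
    (A : Matrix (Fin n) (Fin n) D) (f : Polynomial K) : Prop :=
  ∃ B : Matrix (Fin n) (Fin n) D,
    Polynomial.aeval (A.map (algebraMap D K)) f = B.map (algebraMap D K)

/-! Since `μ` is monic and `μ(A) = 0`, the matrix `f(A)` only depends on the remainder
`f %ₘ μ`, and division by the monic `μ` does not leave `D[X]`. Each of the three conditions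
therefore amounts to: the remainder modulo `μ` of every integer-valued polynomial, which has
degree `< deg μ`, lies in `D[X]`. -/

open Polynomial

section Lifts

variable {D K : Type*} [CommRing D] [CommRing K] {φ : D →+* K} {μ : D[X]}

theorem modByMonic_map_mul_add_map (hμ : μ.Monic) (h : K[X]) (g : D[X]) :
    (μ.map φ * h + g.map φ) %ₘ μ.map φ = (g %ₘ μ).map φ := by
  rw [add_modByMonic, self_mul_modByMonic (hμ.map φ), zero_add, map_modByMonic φ hμ]

theorem natDegree_le_of_map_mul_add_map_notMem_lifts [Nontrivial K] (hμ : μ.Monic)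
    {h : K[X]} {g : D[X]} (hf : μ.map φ * h + g.map φ ∉ lifts φ) :
    μ.natDegree ≤ (μ.map φ * h + g.map φ).natDegree := by
  have hne : (μ.map φ * h + g.map φ) %ₘ μ.map φ ≠ μ.map φ * h + g.map φ := fun he =>
    hf (he ▸ (modByMonic_map_mul_add_map hμ h g).symm ▸ (mem_lifts _).2 ⟨_, rfl⟩)
  rw [Ne, modByMonic_eq_self_iff (hμ.map φ), not_lt] at hne
  simpa only [hμ.natDegree_map] using natDegree_le_natDegree hne

theorem natDegree_modByMonic_map_lt [Nontrivial K] (hμ : μ.Monic) {f : K[X]}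
    (hf : f %ₘ μ.map φ ≠ 0) : (f %ₘ μ.map φ).natDegree < μ.natDegree :=
  hμ.natDegree_map φ ▸ natDegree_lt_natDegree hf (degree_modByMonic_lt f (hμ.map φ))

end Lifts

section IntValued

variable {D K : Type*} [CommRing D] [CommRing K] [Algebra D K] {n : ℕ}
  (A : Matrix (Fin n) (Fin n) D)

theorem aeval_matrix_map_map (g : D[X]) :
    aeval (A.map (algebraMap D K)) (g.map (algebraMap D K)) =
      (aeval A g).map (algebraMap D K) := by
  rw [aeval_map_algebraMap]
  exact aeval_algHom_apply (Algebra.ofId D K).mapMatrix A g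

theorem isIntValuedOn_map (g : D[X]) : IsIntValuedOn A (g.map (algebraMap D K)) :=
  ⟨aeval A g, aeval_matrix_map_map A g⟩

variable {A}

theorem IsIntValuedOn.of_aeval_eq {f f' : K[X]} (hf : IsIntValuedOn A f)
    (h : aeval (A.map (algebraMap D K)) f = aeval (A.map (algebraMap D K)) f') :
    IsIntValuedOn A f' := by
  obtain ⟨B, hB⟩ := hf
  exact ⟨B, h ▸ hB⟩

variable (A)

theorem setOf_aeval_isIntValuedOn_eq_iff :
    {M : Matrix (Fin n) (Fin n) K |
        ∃ f : K[X], IsIntValuedOn A f ∧ M = aeval (A.map (algebraMap D K)) f} =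
      {M | ∃ g : D[X], M = (aeval A g).map (algebraMap D K)} ↔
    ∀ f : K[X], IsIntValuedOn A f → ∃ g : D[X],
      aeval (A.map (algebraMap D K)) f =
        aeval (A.map (algebraMap D K)) (g.map (algebraMap D K)) := by
  simp only [aeval_matrix_map_map]
  refine ⟨fun H f hf => ?_, fun H => Set.ext fun M => ⟨?_, ?_⟩⟩
  · have hmem : aeval (A.map (algebraMap D K)) f ∈
        {M | ∃ g : D[X], M = (aeval A g).map (algebraMap D K)} := by
      rw [← H]
      exact ⟨f, hf, rfl⟩
    exact hmem
  · rintro ⟨f, hf, rfl⟩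
    exact H f hf
  · rintro ⟨g, rfl⟩
    exact ⟨g.map (algebraMap D K), isIntValuedOn_map A g, (aeval_matrix_map_map A g).symm⟩

end IntValued

theorem stmt16_general {D : Type*} [CommRing D]
    (K : Type*) [Field K] [Algebra D K] [IsFractionRing D K]
    {n : ℕ} (A : Matrix (Fin n) (Fin n) D)
    (μ : Polynomial D)
    (hμ : μ.map (algebraMap D K) = minpoly K (A.map (algebraMap D K))) :
    [ (∀ f : Polynomial K, IsIntValuedOn A f ↔
        ∃ (h : Polynomial K) (g : Polynomial D),
          f = μ.map (algebraMap D K) * h + g.map (algebraMap D K)),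
      (∀ f : Polynomial K, IsIntValuedOn A f →
        (¬ ∃ g : Polynomial D, g.map (algebraMap D K) = f) →
          μ.natDegree ≤ f.natDegree),
      ({M : Matrix (Fin n) (Fin n) K |
          ∃ f : Polynomial K, IsIntValuedOn A f ∧
            M = Polynomial.aeval (A.map (algebraMap D K)) f} =
        {M : Matrix (Fin n) (Fin n) K |
          ∃ g : Polynomial D, M = (Polynomial.aeval A g).map (algebraMap D K)})
    ].TFAE := by
  set A' := A.map (algebraMap D K)
  have hμ_monic : μ.Monic :=
    monic_of_injective (IsFractionRing.injective D K) (hμ ▸ minpoly.monic (.of_finite K A'))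
  have hroot : aeval A' (μ.map (algebraMap D K)) = 0 := hμ ▸ minpoly.aeval K A'
  rw [setOf_aeval_isIntValuedOn_eq_iff]
  tfae_have 1 → 2 := fun H f hf hf_lift => by
    obtain ⟨h, g, rfl⟩ := (H f).1 hf
    exact natDegree_le_of_map_mul_add_map_notMem_lifts hμ_monic (by rwa [mem_lifts])
  tfae_have 2 → 3 := fun H f hf => by
    have hf_mod := aeval_modByMonic_eq_self_of_root (p := f) hroot
    obtain ⟨g, hg⟩ : ∃ g : D[X], g.map (algebraMap D K) = f %ₘ μ.map (algebraMap D K) := by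
      by_contra hlift
      have hle := H _ (hf.of_aeval_eq hf_mod.symm) hlift
      have hne : f %ₘ μ.map (algebraMap D K) ≠ 0 := fun h0 =>
        hlift ⟨0, by rw [h0, Polynomial.map_zero]⟩
      exact hle.not_gt (natDegree_modByMonic_map_lt hμ_monic hne)
    exact ⟨g, by rw [hg, hf_mod]⟩
  tfae_have 3 → 1 := fun H f => by
    refine ⟨fun hf => ?_, fun ⟨h, g, hfg⟩ => ?_⟩
    · obtain ⟨g, hg⟩ := H f hf
      obtain ⟨h, hh⟩ := hμ ▸ minpoly.dvd K A' (p := f - g.map (algebraMap D K))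
        (by rw [map_sub, hg, sub_self])
      exact ⟨h, g, by rw [← hh, sub_add_cancel]⟩
    · refine (isIntValuedOn_map A g).of_aeval_eq ?_
      rw [hfg, map_add, map_mul, hroot, zero_mul, zero_add]
  tfae_finish

/-- Let `D` be a PID with quotient field `K` and `A` a matrix over `D`
with minimal polynomial `μ_A ∈ D[X]`. The following are equivalent:
(1) `Int(A, M_n(D)) = μ_A·K[X] + D[X]`;
(2) every `f ∈ Int(A, M_n(D))` with `f ∉ D[X]` satisfies `deg f ≥ deg μ_A`;
(3) the ring of images `{f(A) : f ∈ Int(A, M_n(D))}` equals `D[A]`. -/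
theorem stmt16 {D : Type*} [CommRing D] [IsDomain D] [IsPrincipalIdealRing D]
    (K : Type*) [Field K] [Algebra D K] [IsFractionRing D K]
    {n : ℕ} (A : Matrix (Fin n) (Fin n) D)
    (μ : Polynomial D)
    (hμ : μ.map (algebraMap D K) = minpoly K (A.map (algebraMap D K))) :
    [ (∀ f : Polynomial K, IsIntValuedOn A f ↔
        ∃ (h : Polynomial K) (g : Polynomial D),
          f = μ.map (algebraMap D K) * h + g.map (algebraMap D K)),
      (∀ f : Polynomial K, IsIntValuedOn A f →
        (¬ ∃ g : Polynomial D, g.map (algebraMap D K) = f) →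
          μ.natDegree ≤ f.natDegree),
      ({M : Matrix (Fin n) (Fin n) K |
          ∃ f : Polynomial K, IsIntValuedOn A f ∧
            M = Polynomial.aeval (A.map (algebraMap D K)) f} =
        {M : Matrix (Fin n) (Fin n) K |
          ∃ g : Polynomial D, M = (Polynomial.aeval A g).map (algebraMap D K)})
    ].TFAE :=
  stmt16_general K A μ hμ
end

section
/- Let D be a principal ideal domain with quotient field K and A an n×n matrix over D with minimal polynomial μ_A ∈ D[X]. Then there exists a finite set P_A of prime elements of D such that for every prime element p of D not associated to any element of P_A and every ℓ ≥ 1, one has N_{(p^ℓ)}(A) = μ_A·D[X] + p^ℓ·D[X]. -/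
open Polynomial UniqueFactorizationMonoid
open scoped nonZeroDivisors

theorem Submodule.exists_mem_nonZeroDivisors_smul_mem_of_smul_mem {R M : Type*} [CommRing R]
    [IsNoetherianRing R] [AddCommGroup M] [Module R M] [Module.Finite R M] (N : Submodule R M) :
    ∃ d ∈ R⁰, ∀ x : M, ∀ a ∈ R⁰, a • x ∈ N → d • x ∈ N := by
  obtain ⟨d, hann, hd⟩ :=
    annihilator_top_inter_nonZeroDivisors (torsion_isTorsion (R := R) (M := M ⧸ N))
  refine ⟨d, hd, fun x a ha hax => ?_⟩
  have htors : Quotient.mk x ∈ torsion R (M ⧸ N) :=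
    ⟨⟨a, ha⟩, by rwa [Submonoid.smul_def, ← Quotient.mk_smul, Quotient.mk_eq_zero]⟩
  have hdx := congrArg Subtype.val (mem_annihilator.mp hann ⟨_, htors⟩ mem_top)
  rwa [coe_smul, ← Quotient.mk_smul, ZeroMemClass.coe_zero, Quotient.mk_eq_zero] at hdx

theorem monic_of_map_eq_minpoly_s19 {D K B : Type*} [CommRing D] [Field K] [Algebra D K] [Ring B]
    [Algebra K B] (hinj : Function.Injective (algebraMap D K)) {y : B} (hy : IsIntegral K y)
    {μ : D[X]} (hμ : μ.map (algebraMap D K) = minpoly K y) : μ.Monic :=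
  monic_of_injective hinj (hμ ▸ minpoly.monic hy)

theorem aeval_eq_zero_iff_dvd_of_map_eq_minpoly_s19 {D K S T : Type*} [CommRing D] [Field K]
    [Algebra D K] [Ring S] [Algebra D S] [Ring T] [Algebra K T] [Algebra D T]
    [IsScalarTower D K T] (hinj : Function.Injective (algebraMap D K)) (ι : S →ₐ[D] T)
    (hι : Function.Injective ι) {x : S} {μ : D[X]} (hmonic : μ.Monic)
    (hμ : μ.map (algebraMap D K) = minpoly K (ι x)) (p : D[X]) :
    aeval x p = 0 ↔ μ ∣ p := by
  rw [← map_dvd_map _ hinj hmonic, hμ, minpoly.dvd_iff, aeval_map_algebraMap, aeval_algHom_apply,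
    map_eq_zero_iff ι hι]

theorem isCoprime_of_forall_not_associated_factors {D : Type*} [CommRing D] [IsDomain D]
    [IsPrincipalIdealRing D] {q d : D} (hq : Prime q) (hd : d ≠ 0)
    (h : ∀ p ∈ factors d, ¬Associated q p) : IsCoprime q d := by
  refine (hq.irreducible.coprime_iff_not_dvd).2 fun hqd => ?_
  obtain ⟨p, hp, hqp⟩ := exists_mem_factors_of_dvd hd hq.irreducible hqd
  exact h p hp hqp

theorem exists_forall_isCoprime_aeval_eq_smul_iff {D S : Type*} [CommRing D]
    [IsNoetherianRing D] [Ring S] [Algebra D S] [Module.Finite D S] {x : S} {μ : D[X]}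
    (hμ : μ.Monic)
    (hker : ∀ p : D[X], aeval x p = 0 ↔ μ ∣ p) :
    ∃ d ∈ D⁰, ∀ a ∈ D⁰, IsCoprime a d → ∀ f : D[X],
      (∃ B : S, aeval x f = a • B) ↔ ∃ g h : D[X], f = μ * g + C a * h := by
  obtain ⟨d, hd, hsat⟩ := (LinearMap.range (aeval (R := D) x).toLinearMap)
    |>.exists_mem_nonZeroDivisors_smul_mem_of_smul_mem
  refine ⟨d, hd, fun a ha hcop f => ⟨?_, ?_⟩⟩
  · rintro ⟨B, hB⟩
    obtain ⟨g, hg⟩ := hsat B a ha ⟨f, hB⟩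
    have hdvd : μ ∣ C d * f - C a * g := by
      refine (hker _).1 ?_
      simp only [AlgHom.toLinearMap_apply] at hg
      rw [map_sub, map_mul, map_mul, aeval_C, aeval_C, ← Algebra.smul_def, ← Algebra.smul_def, hB,
        hg, smul_smul, smul_smul, mul_comm, sub_self]
    have hmod : C d * (f %ₘ μ) = C a * (g %ₘ μ) := by
      simpa only [← smul_eq_C_mul, smul_modByMonic] using modByMonic_eq_of_dvd_sub hμ hdvd
    obtain ⟨h, hh⟩ := (hcop.map C).dvd_of_dvd_mul_left ⟨_, hmod⟩
    exact ⟨f /ₘ μ, h, by rw [← hh, add_comm, modByMonic_add_div]⟩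
  · rintro ⟨g, h, rfl⟩
    exact ⟨aeval x h, by simp [(hker μ).2 dvd_rfl, Algebra.smul_def]⟩

/-- Let `D` be a PID with quotient field `K` and `A` a matrix over `D`
with minimal polynomial `μ_A ∈ D[X]`. Then there is a finite set `P_A` of prime elements
of `D` such that for every prime `q` of `D` not associated to any element of `P_A` and
every `ℓ ≥ 1`: `N_{(q^ℓ)}(A) = μ_A·D[X] + q^ℓ·D[X]` (stated elementwise). -/
theorem stmt19 {D : Type*} [CommRing D] [IsDomain D] [IsPrincipalIdealRing D]
    (K : Type*) [Field K] [Algebra D K] [IsFractionRing D K]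
    {n : ℕ} (A : Matrix (Fin n) (Fin n) D)
    (μ : Polynomial D)
    (hμ : μ.map (algebraMap D K) = minpoly K (A.map (algebraMap D K))) :
    ∃ P : Finset D, (∀ p ∈ P, Prime p) ∧
      ∀ q : D, Prime q → (∀ p ∈ P, ¬ Associated q p) →
        ∀ ℓ : ℕ, 1 ≤ ℓ →
          ∀ f : Polynomial D, memNullDvd A (q ^ ℓ) f ↔
            ∃ g h : Polynomial D, f = μ * g + Polynomial.C (q ^ ℓ) * h := by
  classical
  have hinj := IsFractionRing.injective D K
  let ι := (Algebra.ofId D K).mapMatrix (m := Fin n)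
  have hμι : μ.map (algebraMap D K) = minpoly K (ι A) := hμ
  have hmonic := monic_of_map_eq_minpoly_s19 hinj (Algebra.IsIntegral.isIntegral _) hμι
  obtain ⟨d, hd, hA⟩ := exists_forall_isCoprime_aeval_eq_smul_iff hmonic
    (aeval_eq_zero_iff_dvd_of_map_eq_minpoly_s19 hinj ι (Matrix.map_injective hinj) hmonic hμι)
  refine ⟨(factors d).toFinset, fun p hp => prime_of_factor p (Multiset.mem_toFinset.mp hp), ?_⟩
  intro q hq hqP ℓ _ f
  have hcop := isCoprime_of_forall_not_associated_factors hq (nonZeroDivisors.ne_zero hd)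
    fun p hp => hqP p (Multiset.mem_toFinset.mpr hp)
  exact hA _ (pow_mem (mem_nonZeroDivisors_of_ne_zero hq.ne_zero) ℓ) hcop.pow_left f
end
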